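/- Let k > 4 be an integer and let X₁, X₂ ⊆ ℝ³ be the surfaces of Example 1. Then the germs at 0 of X₁ and X₂ are bi-Lipschitz equivalent with respect to the outer metric: there exist ε > 0, δ > 0, λ ≥ 1 and a map f : X₁ ∩ B(0,ε) → X₂ with f(0) = 0 such that λ⁻¹·‖p−q‖ ≤ ‖f(p)−f(q)‖ ≤ λ·‖p−q‖ for all p, q ∈ X₁ ∩ B(0,ε), and X₂ ∩ B(0,δ) ⊆ f(X₁ ∩ B(0,ε)). -/

import Mathlib

open Set Metric

noncomputable section

/-- The surface `X₁` of Example 1 in `ℝ³` (coordinates `x = p 0`, `y = p 1`, `t = p 2`). -/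
def ExampleX1 (k : ℕ) : Set (EuclideanSpace ℝ (Fin 3)) :=
  {p | ((p 0 ^ 2 - 2 * p 0 * p 2 + p 1 ^ 2) * (p 0 ^ 2 + 2 * p 0 * p 2 + p 1 ^ 2) - p 2 ^ k) *
        ((p 0 - p 2) ^ 2 + (p 1 - p 2 / 2) ^ 2 - p 2 ^ 2 / 16) *
        ((p 0 - p 2) ^ 2 + (p 1 + p 2 / 2) ^ 2 - p 2 ^ 2 / 16) = 0 ∧ 0 ≤ p 2}

/-- The surface `X₂` of Example 1 in `ℝ³`. -/
def ExampleX2 (k : ℕ) : Set (EuclideanSpace ℝ (Fin 3)) :=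
  {p | ((p 0 ^ 2 - 2 * p 0 * p 2 + p 1 ^ 2) * (p 0 ^ 2 + 2 * p 0 * p 2 + p 1 ^ 2) - p 2 ^ k) *
        ((p 0 - p 2) ^ 2 + p 1 ^ 2 - p 2 ^ 2 / 16) *
        ((p 0 + p 2) ^ 2 + p 1 ^ 2 - p 2 ^ 2 / 16) = 0 ∧ 0 ≤ p 2}

/-- The germs at `0` of `X` and `Y` are bi-Lipschitz equivalent with respect to the
outer metric: there are `ε > 0`, `δ > 0`, `λ ≥ 1` and a map `f : X ∩ B(0,ε) → Y` with
`f 0 = 0`, bi-Lipschitz with constant `λ`, whose image covers `Y ∩ B(0,δ)`. -/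
def OuterLipGermEquiv {n : ℕ} (X Y : Set (EuclideanSpace ℝ (Fin n))) : Prop :=
  ∃ ε > (0 : ℝ), ∃ δ > (0 : ℝ), ∃ lam : ℝ, 1 ≤ lam ∧
    ∃ f : EuclideanSpace ℝ (Fin n) → EuclideanSpace ℝ (Fin n),
      f 0 = 0 ∧
      Set.MapsTo f (X ∩ Metric.ball 0 ε) Y ∧
      (∀ p ∈ X ∩ Metric.ball 0 ε, ∀ q ∈ X ∩ Metric.ball 0 ε,
        lam⁻¹ * ‖p - q‖ ≤ ‖f p - f q‖ ∧ ‖f p - f q‖ ≤ lam * ‖p - q‖) ∧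
      Y ∩ Metric.ball 0 δ ⊆ f '' (X ∩ Metric.ball 0 ε)

/-! ### Auxiliary material for the proof -/

namespace Example1Aux

set_option maxHeartbeats 2000000

abbrev E3 := EuclideanSpace ℝ (Fin 3)

def mk3 (a b c : ℝ) : E3 := WithLp.toLp 2 ![a, b, c]

@[simp] lemma mk3_0 (a b c : ℝ) : mk3 a b c 0 = a := rfl
@[simp] lemma mk3_1 (a b c : ℝ) : mk3 a b c 1 = b := rfl
@[simp] lemma mk3_2 (a b c : ℝ) : mk3 a b c 2 = c := rfl
@[simp] lemma sub3 (x y : E3) (i : Fin 3) : (x - y) i = x i - y i := rfl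

lemma mk3_eq {q : E3} {a b c : ℝ} (h0 : a = q 0) (h1 : b = q 1) (h2 : c = q 2) :
    mk3 a b c = q := by subst h0 h1 h2; ext i; fin_cases i <;> rfl

lemma norm3 (x : E3) : ‖x‖ = Real.sqrt ((x 0)^2 + (x 1)^2 + (x 2)^2) := by
  rw [EuclideanSpace.norm_eq]
  simp [Fin.sum_univ_three, sq_abs, Real.norm_eq_abs]

lemma norm_le_scale {x y : E3} {c : ℝ} (hc : 0 ≤ c)
    (h : (x 0)^2+(x 1)^2+(x 2)^2 ≤ c^2 * ((y 0)^2+(y 1)^2+(y 2)^2)) : ‖x‖ ≤ c * ‖y‖ := by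
  rw [norm3 x, norm3 y, ← Real.sqrt_sq hc, ← Real.sqrt_mul (sq_nonneg c)]
  exact Real.sqrt_le_sqrt h

lemma coord2_le_norm (p : E3) : p 2 ≤ ‖p‖ := by
  rw [norm3]
  calc p 2 ≤ |p 2| := le_abs_self _
  _ = Real.sqrt ((p 2)^2) := (Real.sqrt_sq_eq_abs _).symm
  _ ≤ _ := Real.sqrt_le_sqrt (by nlinarith [sq_nonneg (p 0), sq_nonneg (p 1)])

lemma pairGoal {p q P Q : E3}
    (h1 : (P 0 - Q 0)^2 + (P 1 - Q 1)^2 + (P 2 - Q 2)^2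
        ≤ ((10:ℝ)^8)^2 * ((p 0 - q 0)^2 + (p 1 - q 1)^2 + (p 2 - q 2)^2))
    (h2 : (p 0 - q 0)^2 + (p 1 - q 1)^2 + (p 2 - q 2)^2
        ≤ ((10:ℝ)^8)^2 * ((P 0 - Q 0)^2 + (P 1 - Q 1)^2 + (P 2 - Q 2)^2)) :
    ((10:ℝ)^8)⁻¹ * ‖p - q‖ ≤ ‖P - Q‖ ∧ ‖P - Q‖ ≤ (10:ℝ)^8 * ‖p - q‖ := by
  constructor
  · rw [inv_mul_le_iff₀ (by norm_num : (0:ℝ) < 10^8)]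
    exact norm_le_scale (by norm_num) (by simpa using h2)
  · exact norm_le_scale (by norm_num) (by simpa using h1)

/-! ### Real-variable separation lemmas -/

lemma near_lo {x c r : ℝ} (hr : 0 ≤ r) (h : (x - c)^2 ≤ r^2) : c - r ≤ x := by
  nlinarith [sq_nonneg (x - c + r)]

lemma near_hi {x c r : ℝ} (hr : 0 ≤ r) (h : (x - c)^2 ≤ r^2) : x ≤ c + r := by
  nlinarith [sq_nonneg (x - c - r)]

lemma le_of_sq_le_sq' {x M : ℝ} (hM : 0 ≤ M) (h : x^2 ≤ M^2) : x ≤ M := by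
  nlinarith [sq_nonneg (x - M)]

lemma sepX1c {a b t u v s : ℝ} (ht : 0 ≤ t) (hs : 0 ≤ s)
    (hp : (a - t)^2 + (b - t/2)^2 = t^2/16)
    (hq : (u - s)^2 + (v + s/2)^2 = s^2/16) :
    (t + s)^2 ≤ 10^12 * ((a-u)^2 + (b-v)^2 + (t-s)^2) := by
  have hb : t/4 ≤ b := by
    have := near_lo (x := b) (c := t/2) (r := t/4) (by linarith) (by nlinarith)
    linarith
  have hv : v ≤ -(s/4) := by
    have := near_hi (x := v) (c := -(s/2)) (r := s/4) (by linarith) (by nlinarith)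
    linarith
  nlinarith [sq_nonneg (a-u), sq_nonneg (t-s),
    mul_nonneg (show (0:ℝ) ≤ 4*(b-v)-(t+s) by linarith)
               (show (0:ℝ) ≤ 4*(b-v)+(t+s) by linarith)]

lemma sepX2c {a b t u v s : ℝ} (ht : 0 ≤ t) (hs : 0 ≤ s)
    (hp : (a - t)^2 + b^2 = t^2/16)
    (hq : (u + s)^2 + v^2 = s^2/16) :
    (t + s)^2 ≤ 10^12 * ((a-u)^2 + (b-v)^2 + (t-s)^2) := by
  have hb : 3*t/4 ≤ a := by
    have := near_lo (x := a) (c := t) (r := t/4) (by linarith) (by nlinarith)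
    linarith
  have hv : u ≤ -(3*s/4) := by
    have := near_hi (x := u) (c := -s) (r := s/4) (by linarith) (by nlinarith)
    linarith
  nlinarith [sq_nonneg (b-v), sq_nonneg (t-s),
    mul_nonneg (show (0:ℝ) ≤ 4*(a-u)-(t+s) by linarith)
               (show (0:ℝ) ≤ 4*(a-u)+(t+s) by linarith)]

lemma circF1 {a b t : ℝ} (ht : 0 ≤ t) (hp : (a - t)^2 + (b - t/2)^2 = t^2/16) :
    a^2 ≤ 2*t^2 ∧ b^2 ≤ t^2 ∧ (a^2+b^2)^2 - 4*a^2*t^2 ≤ -(7/8)*t^4 := by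
  have ha1 : 3*t/4 ≤ a := by
    have := near_lo (x := a) (c := t) (r := t/4) (by linarith) (by nlinarith); linarith
  have ha2 : a ≤ 5*t/4 := by
    have := near_hi (x := a) (c := t) (r := t/4) (by linarith) (by nlinarith); linarith
  have hb1 : t/4 ≤ b := by
    have := near_lo (x := b) (c := t/2) (r := t/4) (by linarith) (by nlinarith); linarith
  have hb2 : b ≤ 3*t/4 := by
    have := near_hi (x := b) (c := t/2) (r := t/4) (by linarith) (by nlinarith); linarith
  refine ⟨by nlinarith, by nlinarith, ?_⟩
  have hid : a^2 + b^2 = 2*a*t + b*t - 19/16*t^2 := by nlinarith [hp]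
  rw [hid]
  have hc1 : b*t - 19/16*t^2 ≤ -(7/16)*t^2 := by nlinarith
  have hc2 : 33/16*t^2 ≤ 4*a*t + (b*t - 19/16*t^2) := by nlinarith
  nlinarith [mul_nonneg (show (0:ℝ) ≤ -(7/16)*t^2 - (b*t - 19/16*t^2) by linarith)
                        (show (0:ℝ) ≤ 4*a*t + (b*t - 19/16*t^2) by nlinarith),
             mul_nonneg (sq_nonneg t)
                        (show (0:ℝ) ≤ 4*a*t + (b*t - 19/16*t^2) - 33/16*t^2 by linarith)]

lemma circF2 {a b t : ℝ} (ht : 0 ≤ t) (hp : (a - t)^2 + b^2 = t^2/16) :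
    a^2 ≤ 2*t^2 ∧ b^2 ≤ t^2 ∧ (a^2+b^2)^2 - 4*a^2*t^2 ≤ -(7/8)*t^4 := by
  have ha1 : 3*t/4 ≤ a := by
    have := near_lo (x := a) (c := t) (r := t/4) (by linarith) (by nlinarith); linarith
  have ha2 : a ≤ 5*t/4 := by
    have := near_hi (x := a) (c := t) (r := t/4) (by linarith) (by nlinarith); linarith
  have hb : b^2 ≤ t^2/16 := by nlinarith
  refine ⟨by nlinarith, by nlinarith, ?_⟩
  have hid : a^2 + b^2 = 2*a*t - 15/16*t^2 := by nlinarith [hp]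
  rw [hid]
  have hc2 : 33/16*t^2 ≤ 4*a*t + -(15/16*t^2) := by nlinarith
  nlinarith [mul_nonneg (sq_nonneg t)
                        (show (0:ℝ) ≤ 4*a*t - 15/16*t^2 - 33/16*t^2 by linarith),
             sq_nonneg t, mul_nonneg ht ht]

lemma quartic_A_le {u v s : ℝ}
    (hF : (u^2+v^2)^2 - 4*u^2*s^2 ≤ s^4/100) : u^2 + v^2 ≤ 5*s^2 := by
  nlinarith [sq_nonneg v, sq_nonneg u, sq_nonneg (s^2), sq_nonneg (u^2+v^2 - 5*s^2),
    mul_nonneg (sq_nonneg s) (sq_nonneg v), mul_nonneg (sq_nonneg s) (sq_nonneg u)]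

lemma sq_sub_bound {x y e B : ℝ} (he : 0 ≤ e) (hB : 0 ≤ B)
    (hd : (x-y)^2 ≤ e^2) (hx : x^2 ≤ B^2) (hy : y^2 ≤ B^2) :
    x^2 - y^2 ≤ 2*(B*e) ∧ -(2*(B*e)) ≤ x^2 - y^2 := by
  have h2 : (x+y)^2 ≤ (2*B)^2 := by nlinarith
  have h3 : (x^2-y^2)^2 ≤ (2*(B*e))^2 := by
    nlinarith [mul_le_mul hd h2 (sq_nonneg (x+y)) (sq_nonneg e)]
  have hM : 0 ≤ 2*(B*e) := by positivity
  constructor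
  · exact le_of_sq_le_sq' hM h3
  · have := le_of_sq_le_sq' hM (by nlinarith : (y^2-x^2)^2 ≤ (2*(B*e))^2)
    linarith

lemma prod_bound {P Q D M : ℝ} (hD : 0 ≤ D) (h0 : 0 ≤ P + Q)
    (hPQ : Q - P ≤ D) (hM : P + Q ≤ M) : Q^2 - P^2 ≤ D*M := by
  nlinarith [mul_nonneg (show (0:ℝ) ≤ D - (Q-P) by linarith) h0,
    mul_nonneg hD (show (0:ℝ) ≤ M - (P+Q) by linarith)]

lemma genbound {A U T S w1 w2 mU mT : ℝ} (hw1 : 0 ≤ w1) (hw2 : 0 ≤ w2)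
    (h1 : A - U ≤ w1) (h2 : T - S ≤ w2) (hU : 0 ≤ U) (hUm : U ≤ mU)
    (hT : 0 ≤ T) (hTm : T ≤ mT) :
    A*T - U*S ≤ mT*w1 + mU*w2 := by
  nlinarith [mul_nonneg hT (show (0:ℝ) ≤ w1 - (A-U) by linarith),
    mul_nonneg hU (show (0:ℝ) ≤ w2 - (T-S) by linarith),
    mul_nonneg hw1 (show (0:ℝ) ≤ mT - T by linarith),
    mul_nonneg hw2 (show (0:ℝ) ≤ mU - U by linarith)]

lemma sepQaux {a b t u v s e : ℝ} (ht : 0 ≤ t) (hs : 0 ≤ s) (he : 0 ≤ e)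
    (ha : a^2 ≤ 2*t^2) (hb : b^2 ≤ t^2)
    (hFp : (a^2+b^2)^2 - 4*a^2*t^2 ≤ -(7/8)*t^4)
    (hFq2 : -(s^4/100) ≤ (u^2+v^2)^2 - 4*u^2*s^2)
    (hAq : u^2 + v^2 ≤ 5*s^2)
    (hst : s ≤ 2*t)
    (hete : e ≤ 3*t/1000000)
    (hd1 : (a-u)^2 ≤ e^2) (hd2 : (b-v)^2 ≤ e^2) (hd3 : (t-s)^2 ≤ e^2) :
    t = 0 := by
  have hs2 : s^2 ≤ 4*t^2 := by nlinarith
  have hu2 : u^2 ≤ 20*t^2 := by nlinarith [sq_nonneg v]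
  have hv2 : v^2 ≤ 20*t^2 := by nlinarith [sq_nonneg u]
  have h5t : (0:ℝ) ≤ 5*t := by linarith
  have q1 := sq_sub_bound he h5t hd1 (by nlinarith : a^2 ≤ (5*t)^2) (by nlinarith : u^2 ≤ (5*t)^2)
  have q2 := sq_sub_bound he h5t hd2 (by nlinarith : b^2 ≤ (5*t)^2) (by nlinarith : v^2 ≤ (5*t)^2)
  have q3 := sq_sub_bound he (show (0:ℝ) ≤ 2*t by linarith) hd3
    (by nlinarith : t^2 ≤ (2*t)^2) (by nlinarith : s^2 ≤ (2*t)^2)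
  have q4 : (u^2+v^2)^2 - (a^2+b^2)^2 ≤ (20*(5*t*e))*(23*t^2) :=
    prod_bound (by positivity) (by positivity) (by linarith [q1.2, q2.2]) (by nlinarith)
  have q5 : a^2*t^2 - u^2*s^2 ≤ t^2*(2*(5*t*e)) + (20*t^2)*(2*(2*t*e)) :=
    genbound (by positivity) (by positivity) q1.1 q3.1 (sq_nonneg u) hu2 (sq_nonneg t) le_rfl
  have hs4 : s^4 ≤ 16*t^4 := by nlinarith [sq_nonneg (s^2 - 4*t^2), sq_nonneg s, sq_nonneg t]
  have key : (7/8)*t^4 - 16*t^4/100 ≤ 2300*(e*t^3) + 160*(e*t^3) + 360*(e*t^3) := by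
    linarith [q4, q5, hFp, hFq2, hs4, mul_nonneg he (pow_nonneg ht 3)]
  have het3 : e*t^3 ≤ 3*t^4/1000000 := by nlinarith [pow_nonneg ht 3]
  have ht4 : t^4 ≤ 0 := by linarith
  have h40 : t^4 = 0 := le_antisymm ht4 (pow_nonneg ht 4)
  exact pow_eq_zero_iff (by norm_num) |>.mp h40

lemma sepQ {a b t u v s : ℝ} (ht : 0 ≤ t) (hs : 0 ≤ s)
    (ha : a^2 ≤ 2*t^2) (hb : b^2 ≤ t^2)
    (hFp : (a^2+b^2)^2 - 4*a^2*t^2 ≤ -(7/8)*t^4)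
    (hFq1 : (u^2+v^2)^2 - 4*u^2*s^2 ≤ s^4/100)
    (hFq2 : -(s^4/100) ≤ (u^2+v^2)^2 - 4*u^2*s^2) :
    (t + s)^2 ≤ 10^12 * ((a-u)^2 + (b-v)^2 + (t-s)^2) := by
  by_contra hcon
  push_neg at hcon
  rcases le_or_gt s (2*t) with hst | hst
  · have hd1 : (a-u)^2 ≤ ((t+s)/1000000)^2 := by linarith [sq_nonneg (b-v), sq_nonneg (t-s)]
    have hd2 : (b-v)^2 ≤ ((t+s)/1000000)^2 := by linarith [sq_nonneg (a-u), sq_nonneg (t-s)]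
    have hd3 : (t-s)^2 ≤ ((t+s)/1000000)^2 := by linarith [sq_nonneg (a-u), sq_nonneg (b-v)]
    have ht0 : t = 0 := sepQaux ht hs (by positivity) ha hb hFp hFq2
      (quartic_A_le hFq1) hst (by nlinarith) hd1 hd2 hd3
    have hs0 : s = 0 := by rw [ht0] at hst; linarith
    rw [ht0, hs0] at hcon
    nlinarith [sq_nonneg (a-u), sq_nonneg (b-v), sq_nonneg (t-s)]
  · nlinarith [sq_nonneg (a-u), sq_nonneg (b-v)]

/-- `t^k ≤ t⁴/100` for small `t`. -/
lemma pow_small {t : ℝ} {k : ℕ} (hk : 4 < k) (h0 : 0 ≤ t) (h1 : t ≤ 1/100) :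
    t^k ≤ t^4/100 := by
  have h4 : t^k = t^4 * t^(k-4) := by rw [← pow_add]; congr 1; omega
  have h2 : t^(k-4) ≤ t^1 := pow_le_pow_of_le_one h0 (by linarith) (by omega)
  rw [h4]
  nlinarith [pow_nonneg h0 4, mul_nonneg (pow_nonneg h0 4)
    (show (0:ℝ) ≤ 1/100 - t^(k-4) by rw [pow_one] at h2; linarith)]

/-! ### The map -/

def fmap (p : E3) : E3 :=
  if (p 0 - p 2)^2 + (p 1 - p 2/2)^2 = p 2^2/16 then mk3 (p 0) (p 1 - p 2/2) (p 2)
  else if (p 0 - p 2)^2 + (p 1 + p 2/2)^2 = p 2^2/16 then mk3 (p 0 - 2*p 2) (p 1 + p 2/2) (p 2)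
  else p

lemma fmap_zero : fmap (0 : E3) = 0 := by
  have h : ((0:E3) 0 - (0:E3) 2)^2 + ((0:E3) 1 - (0:E3) 2/2)^2 = (0:E3) 2^2/16 := by
    show ((0:ℝ) - 0)^2 + ((0:ℝ) - 0/2)^2 = (0:ℝ)^2/16; norm_num
  rw [fmap, if_pos h]
  exact mk3_eq rfl (by show (0:ℝ) - 0/2 = (0:E3) 1; norm_num) rfl

lemma X1_quartic {k : ℕ} {p : E3} (hp : p ∈ ExampleX1 k)
    (h1 : ¬ ((p 0 - p 2)^2 + (p 1 - p 2/2)^2 = p 2^2/16))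
    (h2 : ¬ ((p 0 - p 2)^2 + (p 1 + p 2/2)^2 = p 2^2/16)) :
    ((p 0)^2 + (p 1)^2)^2 - 4*(p 0)^2*(p 2)^2 = (p 2)^k := by
  obtain ⟨hprod, -⟩ := hp
  have hB : (p 0 - p 2)^2 + (p 1 - p 2/2)^2 - p 2^2/16 ≠ 0 := fun h => h1 (by linarith)
  have hC : (p 0 - p 2)^2 + (p 1 + p 2/2)^2 - p 2^2/16 ≠ 0 := fun h => h2 (by linarith)
  rcases mul_eq_zero.mp hprod with h | h
  · rcases mul_eq_zero.mp h with h' | h'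
    · linear_combination h'
    · exact absurd h' hB
  · exact absurd h hC

lemma X2_quartic {k : ℕ} {q : E3} (hq : q ∈ ExampleX2 k)
    (h1 : ¬ ((q 0 - q 2)^2 + (q 1)^2 = q 2^2/16))
    (h2 : ¬ ((q 0 + q 2)^2 + (q 1)^2 = q 2^2/16)) :
    ((q 0)^2 + (q 1)^2)^2 - 4*(q 0)^2*(q 2)^2 = (q 2)^k := by
  obtain ⟨hprod, -⟩ := hq
  have hB : (q 0 - q 2)^2 + (q 1)^2 - q 2^2/16 ≠ 0 := fun h => h1 (by linarith)
  have hC : (q 0 + q 2)^2 + (q 1)^2 - q 2^2/16 ≠ 0 := fun h => h2 (by linarith)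
  rcases mul_eq_zero.mp hprod with h | h
  · rcases mul_eq_zero.mp h with h' | h'
    · linear_combination h'
    · exact absurd h' hB
  · exact absurd h hC

/-! ### The six case estimates -/

section cases
variable {p q : E3}

lemma diag11
    (hfp : fmap p = mk3 (p 0) (p 1 - p 2/2) (p 2))
    (hfq : fmap q = mk3 (q 0) (q 1 - q 2/2) (q 2)) :
    ((10:ℝ)^8)⁻¹ * ‖p - q‖ ≤ ‖fmap p - fmap q‖ ∧ ‖fmap p - fmap q‖ ≤ (10:ℝ)^8 * ‖p - q‖ := by
  rw [hfp, hfq]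
  refine pairGoal ?_ ?_ <;> simp only [mk3_0, mk3_1, mk3_2]
  · nlinarith [sq_nonneg (p 1 - q 1 + (p 2 - q 2)/2), sq_nonneg (p 0 - q 0), sq_nonneg (p 2 - q 2),
      sq_nonneg (p 1 - q 1)]
  · nlinarith [sq_nonneg (p 1 - q 1 - (p 2 - q 2)), sq_nonneg (p 0 - q 0), sq_nonneg (p 2 - q 2),
      sq_nonneg (p 1 - q 1 - (p 2 - q 2)/2)]

lemma diag22
    (hfp : fmap p = mk3 (p 0 - 2*p 2) (p 1 + p 2/2) (p 2))
    (hfq : fmap q = mk3 (q 0 - 2*q 2) (q 1 + q 2/2) (q 2)) :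
    ((10:ℝ)^8)⁻¹ * ‖p - q‖ ≤ ‖fmap p - fmap q‖ ∧ ‖fmap p - fmap q‖ ≤ (10:ℝ)^8 * ‖p - q‖ := by
  rw [hfp, hfq]
  refine pairGoal ?_ ?_ <;> simp only [mk3_0, mk3_1, mk3_2]
  · nlinarith [sq_nonneg (p 0 - q 0 + 2*(p 2 - q 2)), sq_nonneg (p 1 - q 1 - (p 2 - q 2)/2),
      sq_nonneg (p 0 - q 0), sq_nonneg (p 1 - q 1), sq_nonneg (p 2 - q 2)]
  · nlinarith [sq_nonneg (p 0 - q 0 - 4*(p 2 - q 2)), sq_nonneg (p 1 - q 1 + (p 2 - q 2)),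
      sq_nonneg (p 0 - q 0 - 2*(p 2 - q 2)), sq_nonneg (p 1 - q 1 + (p 2 - q 2)/2),
      sq_nonneg (p 2 - q 2)]

lemma diag33 (hfp : fmap p = p) (hfq : fmap q = q) :
    ((10:ℝ)^8)⁻¹ * ‖p - q‖ ≤ ‖fmap p - fmap q‖ ∧ ‖fmap p - fmap q‖ ≤ (10:ℝ)^8 * ‖p - q‖ := by
  rw [hfp, hfq]
  refine pairGoal ?_ ?_ <;>
    nlinarith [sq_nonneg (p 0 - q 0), sq_nonneg (p 1 - q 1), sq_nonneg (p 2 - q 2)]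

lemma cross12 (ht : 0 ≤ p 2) (hs : 0 ≤ q 2)
    (hc1p : (p 0 - p 2)^2 + (p 1 - p 2/2)^2 = p 2^2/16)
    (hc2q : (q 0 - q 2)^2 + (q 1 + q 2/2)^2 = q 2^2/16)
    (hfp : fmap p = mk3 (p 0) (p 1 - p 2/2) (p 2))
    (hfq : fmap q = mk3 (q 0 - 2*q 2) (q 1 + q 2/2) (q 2)) :
    ((10:ℝ)^8)⁻¹ * ‖p - q‖ ≤ ‖fmap p - fmap q‖ ∧ ‖fmap p - fmap q‖ ≤ (10:ℝ)^8 * ‖p - q‖ := by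
  have hsep : (p 2 + q 2)^2 ≤ 10^12 *
      ((p 0 - q 0)^2 + (p 1 - q 1)^2 + (p 2 - q 2)^2) := sepX1c ht hs hc1p hc2q
  have hsep' : (p 2 + q 2)^2 ≤ 10^12 *
      ((p 0 - (q 0 - 2*q 2))^2 + ((p 1 - p 2/2) - (q 1 + q 2/2))^2 + (p 2 - q 2)^2) :=
    sepX2c ht hs hc1p (by linear_combination hc2q)
  rw [hfp, hfq]
  refine pairGoal ?_ ?_ <;> simp only [mk3_0, mk3_1, mk3_2]
  · nlinarith [hsep, sq_nonneg (p 0 - q 0 - 2*q 2), sq_nonneg (p 1 - q 1 + (p 2 + q 2)/2),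
      mul_nonneg ht hs, sq_nonneg (p 2), sq_nonneg (q 2), sq_nonneg (p 2 - q 2),
      sq_nonneg (p 0 - q 0), sq_nonneg (p 1 - q 1)]
  · nlinarith [hsep', sq_nonneg (p 0 - q 0 + 4*q 2), sq_nonneg (p 1 - q 1 - (p 2 + q 2)),
      mul_nonneg ht hs, sq_nonneg (p 2), sq_nonneg (q 2), sq_nonneg (p 2 - q 2),
      sq_nonneg (p 0 - (q 0 - 2*q 2)), sq_nonneg ((p 1 - p 2/2) - (q 1 + q 2/2))]

lemma cross13 (ht : 0 ≤ p 2) (hs : 0 ≤ q 2)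
    (hc1p : (p 0 - p 2)^2 + (p 1 - p 2/2)^2 = p 2^2/16)
    (hFq1 : ((q 0)^2+(q 1)^2)^2 - 4*(q 0)^2*(q 2)^2 ≤ (q 2)^4/100)
    (hFq2 : -((q 2)^4/100) ≤ ((q 0)^2+(q 1)^2)^2 - 4*(q 0)^2*(q 2)^2)
    (hfp : fmap p = mk3 (p 0) (p 1 - p 2/2) (p 2))
    (hfq : fmap q = q) :
    ((10:ℝ)^8)⁻¹ * ‖p - q‖ ≤ ‖fmap p - fmap q‖ ∧ ‖fmap p - fmap q‖ ≤ (10:ℝ)^8 * ‖p - q‖ := by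
  obtain ⟨ha, hb, hF⟩ := circF1 ht hc1p
  have hsep : (p 2 + q 2)^2 ≤ 10^12 *
      ((p 0 - q 0)^2 + (p 1 - q 1)^2 + (p 2 - q 2)^2) := sepQ ht hs ha hb hF hFq1 hFq2
  obtain ⟨ha', hb', hF'⟩ := circF2 ht hc1p
  have hsep' : (p 2 + q 2)^2 ≤ 10^12 *
      ((p 0 - q 0)^2 + ((p 1 - p 2/2) - q 1)^2 + (p 2 - q 2)^2) :=
    sepQ ht hs ha' hb' hF' hFq1 hFq2
  rw [hfp, hfq]
  refine pairGoal ?_ ?_ <;> simp only [mk3_0, mk3_1, mk3_2]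
  · nlinarith [hsep, sq_nonneg (p 1 - q 1 + p 2/2), mul_nonneg ht hs,
      sq_nonneg (p 0 - q 0), sq_nonneg (p 1 - q 1), sq_nonneg (p 2 - q 2), sq_nonneg (q 2)]
  · nlinarith [hsep', sq_nonneg (p 1 - q 1 - p 2), mul_nonneg ht hs,
      sq_nonneg (p 0 - q 0), sq_nonneg ((p 1 - p 2/2) - q 1), sq_nonneg (p 2 - q 2),
      sq_nonneg (q 2)]

lemma cross23 (ht : 0 ≤ p 2) (hs : 0 ≤ q 2)
    (hc2p : (p 0 - p 2)^2 + (p 1 + p 2/2)^2 = p 2^2/16)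
    (hFq1 : ((q 0)^2+(q 1)^2)^2 - 4*(q 0)^2*(q 2)^2 ≤ (q 2)^4/100)
    (hFq2 : -((q 2)^4/100) ≤ ((q 0)^2+(q 1)^2)^2 - 4*(q 0)^2*(q 2)^2)
    (hfp : fmap p = mk3 (p 0 - 2*p 2) (p 1 + p 2/2) (p 2))
    (hfq : fmap q = q) :
    ((10:ℝ)^8)⁻¹ * ‖p - q‖ ≤ ‖fmap p - fmap q‖ ∧ ‖fmap p - fmap q‖ ≤ (10:ℝ)^8 * ‖p - q‖ := by
  obtain ⟨ha, hb, hF⟩ := circF1 (a := p 0) (b := -(p 1)) ht (by linear_combination hc2p)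
  have hsep : (p 2 + q 2)^2 ≤ 10^12 *
      ((p 0 - q 0)^2 + (p 1 - q 1)^2 + (p 2 - q 2)^2) := by
    exact sepQ (u := q 0) (v := q 1) ht hs ha (by linarith : (p 1)^2 ≤ (p 2)^2)
      (by linarith : ((p 0)^2+(p 1)^2)^2 - 4*(p 0)^2*(p 2)^2 ≤ -(7/8)*(p 2)^4)
      hFq1 hFq2
  obtain ⟨ha', hb', hF'⟩ := circF2 (a := -(p 0 - 2*p 2)) (b := p 1 + p 2/2) ht
    (by linear_combination hc2p)
  have hsep' : (p 2 + q 2)^2 ≤ 10^12 *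
      (((p 0 - 2*p 2) - q 0)^2 + ((p 1 + p 2/2) - q 1)^2 + (p 2 - q 2)^2) := by
    have h := sepQ (a := p 0 - 2*p 2) (b := p 1 + p 2/2) (u := q 0) (v := q 1) ht hs
      (by linarith : (p 0 - 2*p 2)^2 ≤ 2*(p 2)^2) hb'
      (by linarith : ((p 0 - 2*p 2)^2+(p 1 + p 2/2)^2)^2 - 4*(p 0 - 2*p 2)^2*(p 2)^2
          ≤ -(7/8)*(p 2)^4)
      hFq1 hFq2
    exact h
  rw [hfp, hfq]
  refine pairGoal ?_ ?_ <;> simp only [mk3_0, mk3_1, mk3_2]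
  · nlinarith [hsep, sq_nonneg (p 0 - q 0 + 2*p 2), sq_nonneg (p 1 - q 1 - p 2/2),
      mul_nonneg ht hs, sq_nonneg (p 0 - q 0), sq_nonneg (p 1 - q 1), sq_nonneg (p 2 - q 2),
      sq_nonneg (q 2)]
  · nlinarith [hsep', sq_nonneg (p 0 - q 0 - 4*p 2), sq_nonneg (p 1 - q 1 + p 2),
      mul_nonneg ht hs, sq_nonneg ((p 0 - 2*p 2) - q 0), sq_nonneg ((p 1 + p 2/2) - q 1),
      sq_nonneg (p 2 - q 2), sq_nonneg (q 2)]

lemma goal_swap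
    (h : ((10:ℝ)^8)⁻¹ * ‖q - p‖ ≤ ‖fmap q - fmap p‖ ∧ ‖fmap q - fmap p‖ ≤ (10:ℝ)^8 * ‖q - p‖) :
    ((10:ℝ)^8)⁻¹ * ‖p - q‖ ≤ ‖fmap p - fmap q‖ ∧ ‖fmap p - fmap q‖ ≤ (10:ℝ)^8 * ‖p - q‖ := by
  rw [norm_sub_rev p q, norm_sub_rev (fmap p) (fmap q)]
  exact h

end cases

end Example1Aux

open Example1Aux

set_option maxHeartbeats 4000000

/-- Theorem 2.1, outer bi-Lipschitz part: for any integer `k > 4`, the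
germs at the origin of the surfaces `X₁` and `X₂` of Example 1 are bi-Lipschitz equivalent
with respect to the outer metric. -/
theorem example1_outer_biLipschitz (k : ℕ) (hk : 4 < k) :
    OuterLipGermEquiv (ExampleX1 k) (ExampleX2 k) := by
  classical
  refine ⟨1/100, by norm_num, 1/400, by norm_num, (10:ℝ)^8, by norm_num, fmap,
    fmap_zero, ?_, ?_, ?_⟩
  · -- MapsTo
    rintro p ⟨⟨hprod, ht⟩, hpB⟩
    by_cases hc1 : (p 0 - p 2)^2 + (p 1 - p 2/2)^2 = p 2^2/16
    · have hfp : fmap p = mk3 (p 0) (p 1 - p 2/2) (p 2) := by rw [fmap, if_pos hc1]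
      rw [hfp]
      refine ⟨?_, ht⟩
      simp only [mk3_0, mk3_1, mk3_2]
      refine mul_eq_zero_of_left (mul_eq_zero_of_right _ ?_) _
      linarith [hc1]
    · by_cases hc2 : (p 0 - p 2)^2 + (p 1 + p 2/2)^2 = p 2^2/16
      · have hfp : fmap p = mk3 (p 0 - 2*p 2) (p 1 + p 2/2) (p 2) := by
          rw [fmap, if_neg hc1, if_pos hc2]
        rw [hfp]
        refine ⟨?_, ht⟩
        simp only [mk3_0, mk3_1, mk3_2]
        refine mul_eq_zero_of_right _ ?_
        linarith [hc2]
      · have hfp : fmap p = p := by rw [fmap, if_neg hc1, if_neg hc2]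
        rw [hfp]
        have hA := X1_quartic ⟨hprod, ht⟩ hc1 hc2
        refine ⟨?_, ht⟩
        refine mul_eq_zero_of_left (mul_eq_zero_of_left ?_ _) _
        linear_combination hA
  · -- bi-Lipschitz
    rintro p ⟨⟨hprodp, htp⟩, hpB⟩ q ⟨⟨hprodq, htq⟩, hqB⟩
    rw [mem_ball, dist_zero_right] at hpB hqB
    have htp1 : p 2 ≤ 1/100 := by linarith [coord2_le_norm p]
    have htq1 : q 2 ≤ 1/100 := by linarith [coord2_le_norm q]
    by_cases hc1p : (p 0 - p 2)^2 + (p 1 - p 2/2)^2 = p 2^2/16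
    · have hfp : fmap p = mk3 (p 0) (p 1 - p 2/2) (p 2) := by rw [fmap, if_pos hc1p]
      by_cases hc1q : (q 0 - q 2)^2 + (q 1 - q 2/2)^2 = q 2^2/16
      · exact diag11 hfp (by rw [fmap, if_pos hc1q])
      · by_cases hc2q : (q 0 - q 2)^2 + (q 1 + q 2/2)^2 = q 2^2/16
        · exact cross12 htp htq hc1p hc2q hfp (by rw [fmap, if_neg hc1q, if_pos hc2q])
        · have hfq : fmap q = q := by rw [fmap, if_neg hc1q, if_neg hc2q]
          have hFq := X1_quartic ⟨hprodq, htq⟩ hc1q hc2q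
          have hFq1 : ((q 0)^2+(q 1)^2)^2 - 4*(q 0)^2*(q 2)^2 ≤ (q 2)^4/100 := by
            rw [hFq]; exact pow_small hk htq htq1
          have hFq2 : -((q 2)^4/100) ≤ ((q 0)^2+(q 1)^2)^2 - 4*(q 0)^2*(q 2)^2 := by
            rw [hFq]; linarith [pow_nonneg htq k, pow_nonneg htq 4]
          exact cross13 htp htq hc1p hFq1 hFq2 hfp hfq
    · by_cases hc2p : (p 0 - p 2)^2 + (p 1 + p 2/2)^2 = p 2^2/16
      · have hfp : fmap p = mk3 (p 0 - 2*p 2) (p 1 + p 2/2) (p 2) := by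
          rw [fmap, if_neg hc1p, if_pos hc2p]
        by_cases hc1q : (q 0 - q 2)^2 + (q 1 - q 2/2)^2 = q 2^2/16
        · exact goal_swap (cross12 htq htp hc1q hc2p (by rw [fmap, if_pos hc1q]) hfp)
        · by_cases hc2q : (q 0 - q 2)^2 + (q 1 + q 2/2)^2 = q 2^2/16
          · exact diag22 hfp (by rw [fmap, if_neg hc1q, if_pos hc2q])
          · have hfq : fmap q = q := by rw [fmap, if_neg hc1q, if_neg hc2q]
            have hFq := X1_quartic ⟨hprodq, htq⟩ hc1q hc2q
            have hFq1 : ((q 0)^2+(q 1)^2)^2 - 4*(q 0)^2*(q 2)^2 ≤ (q 2)^4/100 := by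
              rw [hFq]; exact pow_small hk htq htq1
            have hFq2 : -((q 2)^4/100) ≤ ((q 0)^2+(q 1)^2)^2 - 4*(q 0)^2*(q 2)^2 := by
              rw [hFq]; linarith [pow_nonneg htq k, pow_nonneg htq 4]
            exact cross23 htp htq hc2p hFq1 hFq2 hfp hfq
      · have hfp : fmap p = p := by rw [fmap, if_neg hc1p, if_neg hc2p]
        have hFp := X1_quartic ⟨hprodp, htp⟩ hc1p hc2p
        have hFp1 : ((p 0)^2+(p 1)^2)^2 - 4*(p 0)^2*(p 2)^2 ≤ (p 2)^4/100 := by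
          rw [hFp]; exact pow_small hk htp htp1
        have hFp2 : -((p 2)^4/100) ≤ ((p 0)^2+(p 1)^2)^2 - 4*(p 0)^2*(p 2)^2 := by
          rw [hFp]; linarith [pow_nonneg htp k, pow_nonneg htp 4]
        by_cases hc1q : (q 0 - q 2)^2 + (q 1 - q 2/2)^2 = q 2^2/16
        · exact goal_swap (cross13 htq htp hc1q hFp1 hFp2 (by rw [fmap, if_pos hc1q]) hfp)
        · by_cases hc2q : (q 0 - q 2)^2 + (q 1 + q 2/2)^2 = q 2^2/16
          · exact goal_swap (cross23 htq htp hc2q hFp1 hFp2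
              (by rw [fmap, if_neg hc1q, if_pos hc2q]) hfp)
          · exact diag33 hfp (by rw [fmap, if_neg hc1q, if_neg hc2q])
  · -- covering
    rintro q ⟨⟨hprod, hs⟩, hqB⟩
    rw [mem_ball, dist_zero_right] at hqB
    by_cases h2 : (q 0 - q 2)^2 + (q 1)^2 = q 2^2/16
    · refine ⟨mk3 (q 0) (q 1 + q 2/2) (q 2), ⟨⟨?_, hs⟩, ?_⟩, ?_⟩
      · simp only [mk3_0, mk3_1, mk3_2]
        refine mul_eq_zero_of_left (mul_eq_zero_of_right _ ?_) _
        linarith [h2]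
      · rw [mem_ball, dist_zero_right]
        have h4 : ‖mk3 (q 0) (q 1 + q 2/2) (q 2)‖ ≤ 2 * ‖q‖ := by
          refine norm_le_scale (by norm_num) ?_
          simp only [mk3_0, mk3_1, mk3_2]
          nlinarith [sq_nonneg (q 1 - q 2/2), sq_nonneg (q 0), sq_nonneg (q 1), sq_nonneg (q 2)]
        linarith
      · have hcond : (mk3 (q 0) (q 1 + q 2/2) (q 2) 0 - mk3 (q 0) (q 1 + q 2/2) (q 2) 2)^2
            + (mk3 (q 0) (q 1 + q 2/2) (q 2) 1 - mk3 (q 0) (q 1 + q 2/2) (q 2) 2/2)^2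
            = mk3 (q 0) (q 1 + q 2/2) (q 2) 2^2/16 := by
          simp only [mk3_0, mk3_1, mk3_2]
          linarith [h2]
        rw [fmap, if_pos hcond]
        exact mk3_eq (by simp only [mk3_0]) (by simp only [mk3_1, mk3_2]; ring)
          (by simp only [mk3_2])
    · by_cases h3 : (q 0 + q 2)^2 + (q 1)^2 = q 2^2/16
      · rcases eq_or_lt_of_le hs with hq20 | hq2pos
        · exfalso
          apply h2
          rw [← hq20] at h3 ⊢
          linarith [h3]
        · refine ⟨mk3 (q 0 + 2*q 2) (q 1 - q 2/2) (q 2), ⟨⟨?_, hs⟩, ?_⟩, ?_⟩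
          · simp only [mk3_0, mk3_1, mk3_2]
            refine mul_eq_zero_of_right _ ?_
            linarith [h3]
          · rw [mem_ball, dist_zero_right]
            have h4 : ‖mk3 (q 0 + 2*q 2) (q 1 - q 2/2) (q 2)‖ ≤ 4 * ‖q‖ := by
              refine norm_le_scale (by norm_num) ?_
              simp only [mk3_0, mk3_1, mk3_2]
              nlinarith [sq_nonneg (q 0 - 2*q 2), sq_nonneg (q 1 + q 2/2), sq_nonneg (q 0),
                sq_nonneg (q 1), sq_nonneg (q 2)]
            linarith
          · have hnc1 : ¬ ((mk3 (q 0 + 2*q 2) (q 1 - q 2/2) (q 2) 0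
                - mk3 (q 0 + 2*q 2) (q 1 - q 2/2) (q 2) 2)^2
                + (mk3 (q 0 + 2*q 2) (q 1 - q 2/2) (q 2) 1
                - mk3 (q 0 + 2*q 2) (q 1 - q 2/2) (q 2) 2/2)^2
                = mk3 (q 0 + 2*q 2) (q 1 - q 2/2) (q 2) 2^2/16) := by
              simp only [mk3_0, mk3_1, mk3_2]
              intro hcc
              nlinarith [h3, hcc, sq_nonneg (q 0 + q 2), mul_pos hq2pos hq2pos,
                sq_nonneg (q 1 - q 2/2)]
            have hcond2 : (mk3 (q 0 + 2*q 2) (q 1 - q 2/2) (q 2) 0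
                - mk3 (q 0 + 2*q 2) (q 1 - q 2/2) (q 2) 2)^2
                + (mk3 (q 0 + 2*q 2) (q 1 - q 2/2) (q 2) 1
                + mk3 (q 0 + 2*q 2) (q 1 - q 2/2) (q 2) 2/2)^2
                = mk3 (q 0 + 2*q 2) (q 1 - q 2/2) (q 2) 2^2/16 := by
              simp only [mk3_0, mk3_1, mk3_2]
              linarith [h3]
            rw [fmap, if_neg hnc1, if_pos hcond2]
            exact mk3_eq (by simp only [mk3_0, mk3_2]; ring)
              (by simp only [mk3_1, mk3_2]; ring) (by simp only [mk3_2])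
      · have hA := X2_quartic ⟨hprod, hs⟩ h2 h3
        have hX1 : q ∈ ExampleX1 k := by
          refine ⟨?_, hs⟩
          refine mul_eq_zero_of_left (mul_eq_zero_of_left ?_ _) _
          linear_combination hA
        refine ⟨q, ⟨hX1, ?_⟩, ?_⟩
        · rw [mem_ball, dist_zero_right]; linarith
        · by_cases hc1 : (q 0 - q 2)^2 + (q 1 - q 2/2)^2 = q 2^2/16
          · exfalso
            obtain ⟨-, -, hF⟩ := circF1 hs hc1
            have h4 : q 2^4 ≤ 0 := by linarith [pow_nonneg hs k, hA, hF]
            have hq20 : q 2 = 0 :=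
              pow_eq_zero_iff (n := 4) (by norm_num) |>.mp
                (le_antisymm h4 (pow_nonneg hs 4))
            apply h2
            rw [hq20] at hc1 ⊢
            linarith [hc1]
          · by_cases hc2 : (q 0 - q 2)^2 + (q 1 + q 2/2)^2 = q 2^2/16
            · exfalso
              obtain ⟨-, -, hF⟩ := circF1 (a := q 0) (b := -(q 1)) hs (by linear_combination hc2)
              have h4 : q 2^4 ≤ 0 := by linarith [pow_nonneg hs k, hA, hF]
              have hq20 : q 2 = 0 :=
                pow_eq_zero_iff (n := 4) (by norm_num) |>.mp
                  (le_antisymm h4 (pow_nonneg hs 4))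
              apply h2
              rw [hq20] at hc2 ⊢
              linarith [hc2]
            · rw [fmap, if_neg hc1, if_neg hc2]
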